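/- arXiv:2303.13771 — 5 statements merged into one kernel-verified Lean document; each statement's English description precedes it below -/
import Mathlib

section
/- Let D ≥ 1 be an integer and let V be a real number with 0 < V < D(D+1)/3. Define f(x) = ∑_{z=1}^{D} (2z² − 2V)·x^{z²} − V. Then there exists x ∈ (0, 1) with f(x) = 0; equivalently, there exists γ > 0 with ∑_{z=1}^{D} (2z² − 2V)·e^{-γ z²} − V = 0. Moreover, for any such γ > 0 the pmf p(z) = C·e^{-γ z²}, with C = 1/(2·∑_{z=1}^{D} e^{-γ z²} + 1), is strictly decreasing in |z| on {0, 1, …, D}: for all integers 0 ≤ z < z' ≤ D, p(z') < p(z). -/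
/-!
At `x = 0` the polynomial `f` equals `-V < 0`, and at `x = 1` it equals
`(2D + 1) (D(D+1)/3 - V) > 0` by the formula for `∑ z²`; the intermediate value theorem gives a
root in `(0, 1)`. Monotonicity of the pmf only needs `γ > 0`: the constant `C` is positive and
`z ↦ e^{-γ z²}` is strictly decreasing on `[0, ∞)`.
-/

open Finset Real

theorem sum_Icc_one_sq (D : ℕ) :
    ∑ z ∈ Icc 1 D, (z : ℝ) ^ 2 = D * (D + 1) * (2 * D + 1) / 6 := by
  induction D with
  | zero => simp
  | succ n ih =>
    rw [sum_Icc_succ_top (by omega), ih]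
    push_cast
    ring

noncomputable def tablebuilderPoly (D : ℕ) (V x : ℝ) : ℝ :=
  (∑ z ∈ Icc 1 D, (2 * (z : ℝ) ^ 2 - 2 * V) * x ^ (z ^ 2)) - V

namespace tablebuilderPoly

variable (D : ℕ) (V : ℝ)

theorem continuous : Continuous (tablebuilderPoly D V) := by
  unfold tablebuilderPoly
  fun_prop

theorem eval_zero : tablebuilderPoly D V 0 = -V := by
  have hterm : ∀ z ∈ Icc 1 D, (2 * (z : ℝ) ^ 2 - 2 * V) * (0 : ℝ) ^ (z ^ 2) = 0 := by
    intro z hz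
    have hz : z ^ 2 ≠ 0 := pow_ne_zero 2 (by grind)
    rw [zero_pow hz, mul_zero]
  simp [tablebuilderPoly, sum_congr rfl hterm]

theorem eval_one : tablebuilderPoly D V 1 = (2 * D + 1) * (D * (D + 1) / 3 - V) := by
  simp only [tablebuilderPoly, one_pow, mul_one]
  rw [sum_sub_distrib, ← mul_sum, sum_Icc_one_sq, sum_const, Nat.card_Icc]
  simp only [add_tsub_cancel_right, nsmul_eq_mul]
  ring

theorem exists_root_mem_Ioo (hV0 : 0 < V) (hV1 : V < D * (D + 1) / 3) :
    ∃ x ∈ Set.Ioo (0 : ℝ) 1, tablebuilderPoly D V x = 0 := by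
  have hneg : tablebuilderPoly D V 0 < 0 := by rw [eval_zero]; linarith
  have hpos : 0 < tablebuilderPoly D V 1 := by rw [eval_one]; nlinarith
  exact intermediate_value_Ioo zero_le_one (continuous D V).continuousOn ⟨hneg, hpos⟩

end tablebuilderPoly

theorem Real.exp_neg_mul_sq_lt_exp_neg_mul_sq {γ a b : ℝ} (hγ : 0 < γ) (ha : 0 ≤ a)
    (hab : a < b) : exp (-γ * b ^ 2) < exp (-γ * a ^ 2) := by
  have hsq : a ^ 2 < b ^ 2 := pow_lt_pow_left₀ hab ha two_ne_zero
  exact exp_lt_exp.mpr (by nlinarith)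

theorem tablebuilder_root_exists_and_decreasing_general
    (D : ℕ) (V : ℝ) (hV0 : 0 < V) (hV1 : V < (D : ℝ) * ((D : ℝ) + 1) / 3)
    (f : ℝ → ℝ)
    (hf : ∀ x : ℝ, f x = (∑ z ∈ Finset.Icc 1 D, (2 * (z : ℝ) ^ 2 - 2 * V) * x ^ (z ^ 2)) - V) :
    (∃ x ∈ Set.Ioo (0 : ℝ) 1, f x = 0) ∧
    (∀ γ : ℝ, 0 < γ →
      (∑ z ∈ Finset.Icc 1 D, (2 * (z : ℝ) ^ 2 - 2 * V) * Real.exp (-γ * (z : ℝ) ^ 2)) - V = 0 →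
      ∀ z z' : ℕ, z < z' → z' ≤ D →
        (1 / (2 * ∑ w ∈ Finset.Icc 1 D, Real.exp (-γ * (w : ℝ) ^ 2) + 1)) *
            Real.exp (-γ * (z' : ℝ) ^ 2) <
        (1 / (2 * ∑ w ∈ Finset.Icc 1 D, Real.exp (-γ * (w : ℝ) ^ 2) + 1)) *
            Real.exp (-γ * (z : ℝ) ^ 2)) := by
  have hf_eq : f = tablebuilderPoly D V := funext hf
  refine ⟨hf_eq ▸ tablebuilderPoly.exists_root_mem_Ioo D V hV0 hV1, ?_⟩
  intro γ hγ _ z z' hzz' _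
  have hC : 0 < 1 / (2 * ∑ w ∈ Icc 1 D, exp (-γ * (w : ℝ) ^ 2) + 1) := by positivity
  exact mul_lt_mul_of_pos_left
    (exp_neg_mul_sq_lt_exp_neg_mul_sq hγ z.cast_nonneg (by exact_mod_cast hzz')) hC

/-- If `0 < V < D(D+1)/3` then `f(x) = ∑_{z=1}^D (2z² − 2V) x^{z²} − V` has a root in `(0,1)`
(equivalently, there is `γ > 0` solving the variance equation), and for any such `γ > 0`
the pmf `p z = C e^{-γ z²}` is strictly decreasing in `|z|` on `{0, …, D}`. -/
theorem tablebuilder_root_exists_and_decreasing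
    (D : ℕ) (hD : 1 ≤ D) (V : ℝ) (hV0 : 0 < V) (hV1 : V < (D : ℝ) * ((D : ℝ) + 1) / 3)
    (f : ℝ → ℝ)
    (hf : ∀ x : ℝ, f x = (∑ z ∈ Finset.Icc 1 D, (2 * (z : ℝ) ^ 2 - 2 * V) * x ^ (z ^ 2)) - V) :
    (∃ x ∈ Set.Ioo (0 : ℝ) 1, f x = 0) ∧
    (∀ γ : ℝ, 0 < γ →
      (∑ z ∈ Finset.Icc 1 D, (2 * (z : ℝ) ^ 2 - 2 * V) * Real.exp (-γ * (z : ℝ) ^ 2)) - V = 0 →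
      ∀ z z' : ℕ, z < z' → z' ≤ D →
        (1 / (2 * ∑ w ∈ Finset.Icc 1 D, Real.exp (-γ * (w : ℝ) ^ 2) + 1)) *
            Real.exp (-γ * (z' : ℝ) ^ 2) <
        (1 / (2 * ∑ w ∈ Finset.Icc 1 D, Real.exp (-γ * (w : ℝ) ^ 2) + 1)) *
            Real.exp (-γ * (z : ℝ) ^ 2)) :=
  tablebuilder_root_exists_and_decreasing_general D V hV0 hV1 f hf
end

section
/- Let D ≥ 1 be an integer, γ > 0 and ε > 0 real numbers, and define the pmf on the integers by p(z) = C·e^{-γ z²} for |z| ≤ D and p(z) = 0 for |z| > D, where C = 1/(2·∑_{z=1}^{D} e^{-γ z²} + 1). Let z* = ⌊1/2 − ε/(2γ)⌋ and suppose −D < z* ≤ 0. Then for all integers n, n′ with |n − n′| ≤ 1 and every set E of integers, ∑_{y∈E} p(y − n) ≤ e^{ε} · ∑_{y∈E} p(y − n′) + δ, where δ = C·e^{-γ D²} + C·∑_{z=−D+1}^{z*} (e^{-γ z²} − e^{ε}·e^{-γ (z−1)²}). That is, the mechanism M(x) = q(x) + Z for a single counting query q satisfies (ε, δ)-differential privacy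 with this δ. -/
/-!
For every event `E`, `P[M(x) ∈ E] - e^ε P[M(x') ∈ E]` is at most the hockey-stick divergence
`∑_y max (p (y - n) - e^ε p (y - n')) 0`. After translating by `n` and, if necessary, reflecting
`z ↦ -z` (`p` is even), only `n' = n + 1` is left, `n = n'` being trivial because `e^ε ≥ 1`.
The log-ratio `log (p z / p (z - 1)) = γ - 2γz` decreases in `z` and is at least `ε` exactly for
`z ≤ z*`; so the divergence is the mass `p (-D)` (as `p (-D - 1) = 0`) plus the positive terms
`p z - e^ε p (z - 1)` for `-D < z ≤ z*`, which is `δ`.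
-/

open Finset Real

noncomputable def hockeyStick {α : Type*} (c : ℝ) (f g : α → ℝ) : ℝ :=
  ∑' y, max (f y - c * g y) 0

section HockeyStick

variable {α : Type*}

theorem tsum_subtype_le_mul_add_hockeyStick {f g : α → ℝ} (hf : Summable f) (hg : Summable g)
    (c : ℝ) (E : Set α) :
    ∑' y : E, f y ≤ c * ∑' y : E, g y + hockeyStick c f g := by
  have hpos : Summable fun y => max (f y - c * g y) 0 :=
    (hf.sub (hg.mul_left c)).abs.of_nonneg_of_le (fun _ => le_max_right _ _)
      (fun _ => max_le (le_abs_self _) (abs_nonneg _))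
  calc ∑' y : E, f y ≤ ∑' y : E, (c * g y + max (f y - c * g y) 0) :=
        (hf.subtype E).tsum_le_tsum (fun y => by linarith [le_max_left (f y - c * g y) 0])
          (((hg.subtype E).mul_left c).add (hpos.subtype E))
    _ = c * ∑' y : E, g y + ∑' y : E, max (f y - c * g y) 0 := by
        rw [← tsum_mul_left]
        exact ((hg.subtype E).mul_left c).tsum_add (hpos.subtype E)
    _ ≤ c * ∑' y : E, g y + hockeyStick c f g := by
        gcongr
        exact hpos.tsum_subtype_le _ E (fun _ => le_max_right _ _)

theorem hockeyStick_self {c : ℝ} (hc : 1 ≤ c) {f : α → ℝ} (hf : ∀ y, 0 ≤ f y) :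
    hockeyStick c f f = 0 := by
  simp only [hockeyStick]
  convert tsum_zero with y
  exact max_eq_right (by nlinarith [hf y])

variable {G : Type*} [AddCommGroup G]

theorem hockeyStick_comp_sub (c : ℝ) (f : G → ℝ) (n n' : G) :
    hockeyStick c (fun y => f (y - n)) (fun y => f (y - n')) =
      hockeyStick c f (fun z => f (z + (n - n'))) := by
  rw [hockeyStick, ← (Equiv.addRight n).tsum_eq]
  simp [hockeyStick, add_sub_assoc']

theorem hockeyStick_comp_add_neg {f : G → ℝ} (hf : ∀ z, f (-z) = f z) (c : ℝ) (k : G) :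
    hockeyStick c f (fun z => f (z + -k)) = hockeyStick c f (fun z => f (z + k)) := by
  rw [hockeyStick, ← (Equiv.neg G).tsum_eq]
  simp only [Equiv.neg_apply, hockeyStick, hf]
  congr! 4
  rw [← hf, neg_add, neg_neg, neg_neg]

end HockeyStick

noncomputable def truncGauss (C γ : ℝ) (D : ℕ) (z : ℤ) : ℝ :=
  if |z| ≤ (D : ℤ) then C * exp (-γ * (z : ℝ) ^ 2) else 0

namespace truncGauss

variable {C γ : ℝ} {D : ℕ}

theorem of_abs_le {z : ℤ} (h : |z| ≤ D) : truncGauss C γ D z = C * exp (-γ * (z : ℝ) ^ 2) :=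
  if_pos h

theorem of_lt_abs {z : ℤ} (h : (D : ℤ) < |z|) : truncGauss C γ D z = 0 :=
  if_neg h.not_ge

theorem nonneg (hC : 0 ≤ C) (z : ℤ) : 0 ≤ truncGauss C γ D z := by
  unfold truncGauss
  split_ifs <;> positivity

theorem neg (z : ℤ) : truncGauss C γ D (-z) = truncGauss C γ D z := by
  simp [truncGauss]

theorem summable_comp_sub (n : ℤ) : Summable fun y => truncGauss C γ D (y - n) :=
  summable_of_ne_finset_zero (s := Icc (n - D) (n + D)) fun y hy =>
    of_lt_abs (by rw [mem_Icc] at hy; rw [lt_abs]; omega)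

end truncGauss

theorem exp_mul_exp_le_iff_le_floor {γ : ℝ} (hγ : 0 < γ) (ε : ℝ) (z : ℤ) :
    exp ε * exp (-γ * ((z : ℝ) - 1) ^ 2) ≤ exp (-γ * (z : ℝ) ^ 2) ↔
      z ≤ ⌊(1 : ℝ) / 2 - ε / (2 * γ)⌋ := by
  rw [← exp_add, exp_le_exp, Int.le_floor,
    show (1 : ℝ) / 2 - ε / (2 * γ) = (γ - ε) / (2 * γ) by field_simp,
    le_div_iff₀ (by positivity)]
  constructor <;> intro h <;> nlinarith

theorem hockeyStick_truncGauss_sub_one {C γ : ℝ} (hC : 0 ≤ C) (hγ : 0 < γ) (D : ℕ)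
    (ε : ℝ) {zstar : ℤ} (hzstar : zstar = ⌊(1 : ℝ) / 2 - ε / (2 * γ)⌋)
    (hhigh : zstar ≤ 0) :
    hockeyStick (exp ε) (truncGauss C γ D) (fun z => truncGauss C γ D (z - 1)) =
      C * exp (-γ * (D : ℝ) ^ 2) + C * ∑ z ∈ Icc (-(D : ℤ) + 1) zstar,
        (exp (-γ * (z : ℝ) ^ 2) - exp ε * exp (-γ * ((z : ℝ) - 1) ^ 2)) := by
  have hsupp :
      hockeyStick (exp ε) (truncGauss C γ D) (fun z => truncGauss C γ D (z - 1)) =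
        ∑ z ∈ Icc (-(D : ℤ)) D,
          max (truncGauss C γ D z - exp ε * truncGauss C γ D (z - 1)) 0 := by
    refine tsum_eq_sum fun z hz => ?_
    rw [truncGauss.of_lt_abs (by rw [mem_Icc] at hz; rw [lt_abs]; omega), zero_sub]
    exact max_eq_right (neg_nonpos.2 (mul_nonneg (exp_pos ε).le (truncGauss.nonneg hC _)))
  have hleft : truncGauss C γ D (-D) - exp ε * truncGauss C γ D (-D - 1) =
      C * exp (-γ * (D : ℝ) ^ 2) := by
    rw [truncGauss.of_abs_le (by simp), truncGauss.of_lt_abs (by rw [lt_abs]; omega)]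
    simp
  have hinner : ∀ z ∈ Icc (-(D : ℤ) + 1) D,
      max (truncGauss C γ D z - exp ε * truncGauss C γ D (z - 1)) 0 =
        C * if z ≤ zstar then
          exp (-γ * (z : ℝ) ^ 2) - exp ε * exp (-γ * ((z : ℝ) - 1) ^ 2) else 0 := by
    intro z hz
    rw [mem_Icc] at hz
    rw [truncGauss.of_abs_le (abs_le.2 ⟨by omega, by omega⟩),
      truncGauss.of_abs_le (abs_le.2 ⟨by omega, by omega⟩), Int.cast_sub, Int.cast_one,
      ← mul_left_comm, ← mul_sub]
    have hratio := exp_mul_exp_le_iff_le_floor hγ ε z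
    rw [← hzstar] at hratio
    split_ifs with h
    · exact max_eq_left (mul_nonneg hC (sub_nonneg.2 (hratio.2 h)))
    · rw [mul_zero]
      exact max_eq_right (mul_nonpos_of_nonneg_of_nonpos hC
        (sub_nonpos.2 (not_le.1 (mt hratio.1 h)).le))
  have hfilter : {z ∈ Icc (-(D : ℤ) + 1) D | z ≤ zstar} = Icc (-(D : ℤ) + 1) zstar := by
    ext z; simp only [mem_filter, mem_Icc]; omega
  rw [hsupp, ← insert_Icc_add_one_left_eq_Icc (by omega), sum_insert (by simp), hleft,
    max_eq_left (by positivity), sum_congr rfl hinner, ← mul_sum, ← sum_filter, hfilter]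

theorem tablebuilder_dp_general_case_general
    (D : ℕ) (γ ε : ℝ) (hγ : 0 < γ) (hε : 0 < ε)
    (C : ℝ)
    (hC : C = 1 / (2 * ∑ w ∈ Finset.Icc 1 D, Real.exp (-γ * (w : ℝ) ^ 2) + 1))
    (p : ℤ → ℝ)
    (hp : ∀ z : ℤ, p z = if |z| ≤ (D : ℤ) then C * Real.exp (-γ * (z : ℝ) ^ 2) else 0)
    (zstar : ℤ) (hzstar : zstar = ⌊(1 : ℝ) / 2 - ε / (2 * γ)⌋)
    (hhigh : zstar ≤ 0)
    (δ : ℝ)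
    (hδ : δ = C * Real.exp (-γ * (D : ℝ) ^ 2) +
        C * ∑ z ∈ Finset.Icc (-(D : ℤ) + 1) zstar,
          (Real.exp (-γ * (z : ℝ) ^ 2) - Real.exp ε * Real.exp (-γ * ((z : ℝ) - 1) ^ 2))) :
    ∀ n n' : ℤ, |n - n'| ≤ 1 → ∀ E : Set ℤ,
      (∑' y : E, p ((y : ℤ) - n)) ≤ Real.exp ε * (∑' y : E, p ((y : ℤ) - n')) + δ := by
  obtain rfl : p = truncGauss C γ D := funext hp
  have hC0 : 0 ≤ C := hC ▸ by positivity
  have hδ_eq :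
      hockeyStick (exp ε) (truncGauss C γ D) (fun z => truncGauss C γ D (z + -1)) = δ := by
    simpa only [← sub_eq_add_neg, ← hδ] using
      hockeyStick_truncGauss_sub_one hC0 hγ D ε hzstar hhigh
  intro n n' hnn' E
  refine (tsum_subtype_le_mul_add_hockeyStick (truncGauss.summable_comp_sub n)
    (truncGauss.summable_comp_sub n') _ E).trans (add_le_add_right ?_ _)
  rw [hockeyStick_comp_sub]
  obtain h | h | h : n - n' = -1 ∨ n - n' = 0 ∨ n - n' = 1 := by rw [abs_le] at hnn'; omega
  · rw [h, hδ_eq]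
  · simp only [h, add_zero, hockeyStick_self (one_le_exp hε.le) (truncGauss.nonneg hC0)]
    exact hδ_eq ▸ tsum_nonneg fun _ => le_max_right _ _
  · rw [h, ← hockeyStick_comp_add_neg truncGauss.neg, hδ_eq]

/-- If `z* = ⌊1/2 − ε/(2γ)⌋` satisfies `−D < z* ≤ 0`, the TableBuilder mechanism with noise
pmf `p z = C e^{-γ z²}` on `[-D, D]` satisfies `(ε, δ)`-DP with
`δ = C e^{-γ D²} + C ∑_{z=−D+1}^{z*} (e^{-γ z²} − e^ε e^{-γ (z−1)²})`. -/
theorem tablebuilder_dp_general_case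
    (D : ℕ) (hD : 1 ≤ D) (γ ε : ℝ) (hγ : 0 < γ) (hε : 0 < ε)
    (C : ℝ)
    (hC : C = 1 / (2 * ∑ w ∈ Finset.Icc 1 D, Real.exp (-γ * (w : ℝ) ^ 2) + 1))
    (p : ℤ → ℝ)
    (hp : ∀ z : ℤ, p z = if |z| ≤ (D : ℤ) then C * Real.exp (-γ * (z : ℝ) ^ 2) else 0)
    (zstar : ℤ) (hzstar : zstar = ⌊(1 : ℝ) / 2 - ε / (2 * γ)⌋)
    (hlow : -(D : ℤ) < zstar) (hhigh : zstar ≤ 0)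
    (δ : ℝ)
    (hδ : δ = C * Real.exp (-γ * (D : ℝ) ^ 2) +
        C * ∑ z ∈ Finset.Icc (-(D : ℤ) + 1) zstar,
          (Real.exp (-γ * (z : ℝ) ^ 2) - Real.exp ε * Real.exp (-γ * ((z : ℝ) - 1) ^ 2))) :
    ∀ n n' : ℤ, |n - n'| ≤ 1 → ∀ E : Set ℤ,
      (∑' y : E, p ((y : ℤ) - n)) ≤ Real.exp ε * (∑' y : E, p ((y : ℤ) - n')) + δ :=
  tablebuilder_dp_general_case_general D γ ε hγ hε C hC p hp zstar hzstar hhigh δ hδ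
end

section
/- Let D ≥ 1 be an integer, γ > 0 and ε > 0 real numbers, and define the pmf on the integers by p(z) = C·e^{-γ z²} for |z| ≤ D and p(z) = 0 for |z| > D, where C = 1/(2·∑_{z=1}^{D} e^{-γ z²} + 1). Suppose δ ≥ 0 is such that for all integers n, n′ with |n − n′| ≤ 1 and every set E of integers, ∑_{y∈E} p(y − n) ≤ e^{ε} · ∑_{y∈E} p(y − n′) + δ. Then δ ≥ C·e^{-γ D²}. In other words, C·e^{-γ D²} = p(−D) is a lower bound on the δ achievable by the TableBuilder mechanism at any privacy level ε > 0. -/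
/-!
On count `n' = 0` the output `D + 1` is impossible, since the noise never exceeds `D`,
while on count `n = 1` it has probability `p(D) = C e^{-γ D²}`. No multiplicative factor
`e^ε` can cover an event of probability zero, so `δ` must absorb all of `p(D)`.
-/

lemma le_of_forall_tsum_shift_le {p : ℤ → ℝ} {n n' : ℤ} {c δ : ℝ}
    (h : ∀ E : Set ℤ, ∑' y : E, p (y - n) ≤ c * ∑' y : E, p (y - n') + δ) (y : ℤ) :
    p (y - n) ≤ c * p (y - n') + δ := by
  simpa [tsum_singleton] using h {y}

theorem tablebuilder_dp_delta_lower_bound_general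
    (D : ℕ) (γ ε : ℝ)
    (C : ℝ)
    (p : ℤ → ℝ)
    (hp : ∀ z : ℤ, p z = if |z| ≤ (D : ℤ) then C * Real.exp (-γ * (z : ℝ) ^ 2) else 0)
    (δ : ℝ)
    (hDP : ∀ n n' : ℤ, |n - n'| ≤ 1 → ∀ E : Set ℤ,
      (∑' y : E, p ((y : ℤ) - n)) ≤ Real.exp ε * (∑' y : E, p ((y : ℤ) - n')) + δ) :
    C * Real.exp (-γ * (D : ℝ) ^ 2) ≤ δ := by
  have hp_edge : p D = C * Real.exp (-γ * (D : ℝ) ^ 2) := by simp [hp]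
  have hp_beyond : p (D + 1) = 0 := by
    rw [hp, if_neg]
    rw [abs_of_nonneg (by positivity)]
    omega
  have h := le_of_forall_tsum_shift_le (hDP 1 0 (by norm_num)) (D + 1)
  simpa [hp_edge, hp_beyond] using h

/-- Any `δ ≥ 0` for which the TableBuilder mechanism satisfies `(ε, δ)`-DP must satisfy
`δ ≥ C e^{-γ D²} = p(−D)`. -/
theorem tablebuilder_dp_delta_lower_bound
    (D : ℕ) (hD : 1 ≤ D) (γ ε : ℝ) (hγ : 0 < γ) (hε : 0 < ε)
    (C : ℝ)
    (hC : C = 1 / (2 * ∑ w ∈ Finset.Icc 1 D, Real.exp (-γ * (w : ℝ) ^ 2) + 1))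
    (p : ℤ → ℝ)
    (hp : ∀ z : ℤ, p z = if |z| ≤ (D : ℤ) then C * Real.exp (-γ * (z : ℝ) ^ 2) else 0)
    (δ : ℝ) (hδ0 : 0 ≤ δ)
    (hDP : ∀ n n' : ℤ, |n - n'| ≤ 1 → ∀ E : Set ℤ,
      (∑' y : E, p ((y : ℤ) - n)) ≤ Real.exp ε * (∑' y : E, p ((y : ℤ) - n')) + δ) :
    C * Real.exp (-γ * (D : ℝ) ^ 2) ≤ δ :=
  tablebuilder_dp_delta_lower_bound_general D γ ε C p hp δ hDP
end

section
/- Let D ≥ 1 be an integer and define δ(γ) = e^{-γ D²} / (2·∑_{z=1}^{D} e^{-γ z²} + 1) for real γ. Then δ is a strictly decreasing function of γ on ℝ; equivalently, δ is a strictly increasing function of x = e^{-γ}. -/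
/-!
Multiplying numerator and denominator by `e^{γ D²}` gives
`δ(γ) = 1 / (2 ∑_{z=1}^D e^{γ (D² - z²)} + e^{γ D²})`. Every exponent `D² - z²` is nonnegative
and `D² > 0`, so the new denominator is positive and strictly increasing in `γ`.
-/

open Finset Real

lemma Real.monotone_exp_mul {c : ℝ} (hc : 0 ≤ c) : Monotone fun γ => exp (γ * c) :=
  fun _ _ h => exp_le_exp.mpr (mul_le_mul_of_nonneg_right h hc)

lemma Real.monotone_sum_exp_mul {ι : Type*} (s : Finset ι) {a : ι → ℝ}
    (ha : ∀ i ∈ s, 0 ≤ a i) : Monotone fun γ => ∑ i ∈ s, exp (γ * a i) :=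
  fun _ _ h => sum_le_sum fun i hi => Real.monotone_exp_mul (ha i hi) h

lemma Real.strictMono_exp_mul {c : ℝ} (hc : 0 < c) : StrictMono fun γ => exp (γ * c) :=
  fun _ _ h => exp_lt_exp.mpr (mul_lt_mul_of_pos_right h hc)

lemma StrictMono.inv_of_pos {α : Type*} [Preorder α] {f : α → ℝ} (hf : StrictMono f)
    (hpos : ∀ x, 0 < f x) : StrictAnti fun x => (f x)⁻¹ :=
  fun _ _ h => inv_strictAnti₀ (hpos _) (hf h)

lemma exp_neg_mul_div_eq_inv {ι : Type*} (s : Finset ι) (a : ι → ℝ) (w γ c : ℝ) :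
    exp (-γ * c) / (w * ∑ i ∈ s, exp (-γ * a i) + 1) =
      (w * ∑ i ∈ s, exp (γ * (c - a i)) + exp (γ * c))⁻¹ := by
  have hterm : ∀ i ∈ s, exp (γ * (c - a i)) = exp (γ * c) * exp (-γ * a i) := by
    intro i _
    rw [← exp_add]
    ring_nf
  rw [sum_congr rfl hterm, ← mul_sum, div_eq_mul_inv, neg_mul, exp_neg, ← mul_inv]
  ring_nf

/-- `δ(γ) = e^{-γ D²} / (2 ∑_{z=1}^D e^{-γ z²} + 1)` is strictly decreasing in `γ` on `ℝ`. -/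
theorem tablebuilder_delta_strictAnti
    (D : ℕ) (hD : 1 ≤ D)
    (δ : ℝ → ℝ)
    (hδ : ∀ γ : ℝ, δ γ =
        Real.exp (-γ * (D : ℝ) ^ 2) /
        (2 * ∑ z ∈ Finset.Icc 1 D, Real.exp (-γ * (z : ℝ) ^ 2) + 1)) :
    StrictAnti δ := by
  have hsum_mono : Monotone fun γ => 2 * ∑ z ∈ Icc 1 D, exp (γ * ((D : ℝ) ^ 2 - (z : ℝ) ^ 2)) := by
    refine (Real.monotone_sum_exp_mul _ fun z hz => ?_).const_mul zero_le_two
    have hzD : (z : ℝ) ≤ D := by exact_mod_cast (mem_Icc.mp hz).2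
    exact sub_nonneg.mpr (pow_le_pow_left₀ z.cast_nonneg hzD 2)
  have hlead_strictMono : StrictMono fun γ : ℝ => exp (γ * (D : ℝ) ^ 2) :=
    Real.strictMono_exp_mul (pow_pos (Nat.cast_pos.mpr hD) 2)
  have hδ_inv : δ = fun γ => (2 * ∑ z ∈ Icc 1 D, exp (γ * ((D : ℝ) ^ 2 - (z : ℝ) ^ 2)) +
      exp (γ * (D : ℝ) ^ 2))⁻¹ := by
    funext γ
    rw [hδ, exp_neg_mul_div_eq_inv]
  rw [hδ_inv]
  exact (hsum_mono.add_strictMono hlead_strictMono).inv_of_pos fun γ => by positivity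
end

section
/- Let D ≥ 1 be an integer, ε > 0 a real number, and γ a real number with ε/(2D+1) ≤ γ < ε/(2D−1). Define the pmf on the integers by p(z) = C·e^{-γ z²} for |z| ≤ D and p(z) = 0 for |z| > D, where C = 1/(2·∑_{z=1}^{D} e^{-γ z²} + 1). Then for all integers n, n′ with |n − n′| ≤ 1 and every set E of integers, ∑_{y∈E} p(y − n) ≤ e^{ε} · ∑_{y∈E} p(y − n′) + C·e^{-γ D²}. That is, the TableBuilder mechanism M(x) = q(x) + Z for a single counting query q achieves (ε, δ)-differential privacy with δ = e^{-γ D²} / (2·∑_{z=1}^{D} e^{-γ z²} + 1), and its variance equals (∑_{z=1}^{D} 2z²·e^{-γ z²}) / (2·∑_{z=1}^{D} e^{-γ z²} + 1). -/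
/-!
If both noise values `z = y - n` and `z' = y - n'` behind an output `y` lie in `[-D, D]`, the
privacy loss `p z / p z'` is `exp (γ (z'² - z²))`, and `z'² - z² ≤ 2D - 1` for integers in `[-D, D]`
at distance at most one, so the loss is at most `e^ε` once `γ (2D - 1) ≤ ε`. The only other outputs
with `p z > 0` have `|z| = D` and `z'` outside the support; there is at most one of them, and its
probability `C e^{-γ D²}` is the `δ`. The variance is a sum of an even function over `[-D, D]`.
-/

open Finset Real

theorem Int.sq_sub_sq_le_two_mul_sub_one {D z z' : ℤ} (hD : 1 ≤ D) (hz : |z| ≤ D)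
    (hz' : |z'| ≤ D) (h : |z' - z| ≤ 1) : z' ^ 2 - z ^ 2 ≤ 2 * D - 1 := by
  rw [abs_le] at hz hz' h
  obtain h | h | h : z' = z - 1 ∨ z' = z ∨ z' = z + 1 := by omega
  all_goals subst h; nlinarith

theorem Int.abs_eq_of_abs_le_of_lt_abs {D z z' : ℤ} (hz : |z| ≤ D) (hz' : D < |z'|)
    (h : |z' - z| ≤ 1) : |z| = D := by
  rw [abs_le] at hz h
  rw [lt_abs] at hz'
  rw [abs_eq (by omega)]
  omega

theorem Int.subsingleton_setOf_abs_sub_le_and_lt {D n n' : ℤ} (h : |n - n'| ≤ 1) :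
    {y : ℤ | |y - n| ≤ D ∧ D < |y - n'|}.Subsingleton := by
  rintro y ⟨hy, hy'⟩ x ⟨hx, hx'⟩
  rw [abs_le] at h hy hx
  rw [lt_abs] at hy' hx'
  omega

theorem tsum_subtype_le_mul_add_of_subsingleton {α : Type*} {f g : α → ℝ} {c δ : ℝ} {S : Set α}
    (hS : S.Subsingleton) (hf : Summable f) (hg : Summable g) (hδ : 0 ≤ δ)
    (hfg : ∀ y ∉ S, f y ≤ c * g y) (hfgS : ∀ y ∈ S, f y ≤ c * g y + δ) (E : Set α) :
    ∑' y : E, f y ≤ c * ∑' y : E, g y + δ := by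
  classical
  set e : α → ℝ := S.indicator fun _ => δ
  have he : Summable e :=
    summable_of_hasFiniteSupport (hS.finite.subset Set.support_indicator_subset)
  have hpt : ∀ y, f y ≤ c * g y + e y := by
    intro y
    by_cases hy : y ∈ S
    · simpa [e, hy] using hfgS y hy
    · simpa [e, hy] using hfg y hy
  have he_le : ∑' y, e y ≤ δ := by
    rcases hS.eq_empty_or_singleton with rfl | ⟨a, rfl⟩
    · simpa [e] using hδ
    · simp [e, Set.indicator_singleton]
  have hcg : Summable fun y : E => c * g y := (hg.subtype E).mul_left c
  calc ∑' y : E, f y ≤ ∑' y : E, (c * g y + e y) :=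
        (hf.subtype E).tsum_le_tsum (fun y => hpt y) (hcg.add (he.subtype E))
    _ = c * ∑' y : E, g y + ∑' y : E, e y := by
        rw [← tsum_mul_left]
        exact hcg.tsum_add (he.subtype E)
    _ ≤ c * ∑' y : E, g y + δ := by
        gcongr
        exact (he.tsum_subtype_le e E (Set.indicator_nonneg fun _ _ => hδ)).trans he_le

noncomputable def truncDiscreteGaussian (C γ : ℝ) (D : ℕ) (z : ℤ) : ℝ :=
  if |z| ≤ (D : ℤ) then C * exp (-γ * (z : ℝ) ^ 2) else 0

section
variable {C γ : ℝ} {D : ℕ}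

theorem truncDiscreteGaussian_nonneg (hC : 0 ≤ C) (z : ℤ) :
    0 ≤ truncDiscreteGaussian C γ D z := by
  unfold truncDiscreteGaussian
  split_ifs <;> positivity

theorem summable_truncDiscreteGaussian_comp_sub (n : ℤ) :
    Summable fun y => truncDiscreteGaussian C γ D (y - n) := by
  refine summable_of_hasFiniteSupport ((Set.finite_Icc (n - D) (n + D)).subset fun y hy => ?_)
  contrapose! hy
  rw [Set.mem_Icc] at hy
  simp only [Function.mem_support, not_not, truncDiscreteGaussian, abs_le]
  rw [if_neg (by omega)]

theorem truncDiscreteGaussian_le_exp_mul {ε : ℝ} {z z' : ℤ} (hC : 0 ≤ C) (hγ : 0 ≤ γ)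
    (hD : 1 ≤ D) (hγε : γ * (2 * D - 1) ≤ ε) (hzz' : |z' - z| ≤ 1) (h : |z| ≤ D → |z'| ≤ D) :
    truncDiscreteGaussian C γ D z ≤ exp ε * truncDiscreteGaussian C γ D z' := by
  by_cases hz : |z| ≤ D
  · have hsq : (z' : ℝ) ^ 2 - (z : ℝ) ^ 2 ≤ 2 * D - 1 := by
      exact_mod_cast Int.sq_sub_sq_le_two_mul_sub_one (by exact_mod_cast hD) hz (h hz) hzz'
    rw [truncDiscreteGaussian, truncDiscreteGaussian, if_pos hz, if_pos (h hz), mul_left_comm,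
      ← exp_add]
    gcongr
    nlinarith
  · rw [truncDiscreteGaussian, if_neg hz]
    exact mul_nonneg (exp_pos ε).le (truncDiscreteGaussian_nonneg hC z')

theorem truncDiscreteGaussian_eq_of_abs_le_of_lt_abs {z z' : ℤ} (hz : |z| ≤ D) (hz' : D < |z'|)
    (h : |z' - z| ≤ 1) : truncDiscreteGaussian C γ D z = C * exp (-γ * (D : ℝ) ^ 2) := by
  have hzD : |(z : ℝ)| = D := by exact_mod_cast Int.abs_eq_of_abs_le_of_lt_abs hz hz' h
  rw [truncDiscreteGaussian, if_pos hz, ← sq_abs, hzD]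

theorem tsum_subtype_truncDiscreteGaussian_le {ε : ℝ} (hC : 0 ≤ C) (hγ : 0 ≤ γ) (hD : 1 ≤ D)
    (hγε : γ * (2 * D - 1) ≤ ε) {n n' : ℤ} (hn : |n - n'| ≤ 1) (E : Set ℤ) :
    ∑' y : E, truncDiscreteGaussian C γ D (y - n) ≤
      exp ε * ∑' y : E, truncDiscreteGaussian C γ D (y - n') + C * exp (-γ * (D : ℝ) ^ 2) := by
  have hshift (y : ℤ) : |(y - n') - (y - n)| ≤ 1 := by rwa [sub_sub_sub_cancel_left]
  refine tsum_subtype_le_mul_add_of_subsingleton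
    (S := {y : ℤ | |y - n| ≤ D ∧ D < |y - n'|}) (Int.subsingleton_setOf_abs_sub_le_and_lt hn)
    (summable_truncDiscreteGaussian_comp_sub n) (summable_truncDiscreteGaussian_comp_sub n')
    (by positivity) (fun y hy => ?_) (fun y ⟨hy, hy'⟩ => ?_) E
  · refine truncDiscreteGaussian_le_exp_mul hC hγ hD hγε (hshift y) fun hy_le => ?_
    simpa [hy_le] using hy
  · rw [truncDiscreteGaussian_eq_of_abs_le_of_lt_abs hy hy' (hshift y)]
    exact le_add_of_nonneg_left (mul_nonneg (exp_pos ε).le (truncDiscreteGaussian_nonneg hC _))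

theorem sum_sq_mul_truncDiscreteGaussian :
    ∑ z ∈ Icc (-(D : ℤ)) D, (z : ℝ) ^ 2 * truncDiscreteGaussian C γ D z =
      C * ∑ z ∈ Icc 1 D, 2 * (z : ℝ) ^ 2 * exp (-γ * (z : ℝ) ^ 2) := by
  have hsummand (z) (hz : z ∈ Icc (-(D : ℤ)) D) : (z : ℝ) ^ 2 * truncDiscreteGaussian C γ D z =
      C * ((z : ℝ) ^ 2 * exp (-γ * (z : ℝ) ^ 2)) := by
    rw [truncDiscreteGaussian, if_pos (abs_le.2 (mem_Icc.1 hz))]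
    ring
  have heven : Function.Even fun z : ℤ => (z : ℝ) ^ 2 * exp (-γ * (z : ℝ) ^ 2) := fun z => by
    simp only [Int.cast_neg, neg_sq]
  rw [sum_congr rfl hsummand, ← mul_sum, sum_Icc_of_even_eq_range heven, range_eq_Ico,
    sum_eq_sum_Ico_succ_bot (by omega), Ico_add_one_right_eq_Icc]
  simp [mul_sum, two_mul, add_mul]

end

/-- If `ε/(2D+1) ≤ γ < ε/(2D−1)`, the TableBuilder mechanism with noise pmf
`p z = C e^{-γ z²}` on `[-D, D]` achieves `(ε, δ)`-DP with
`δ = e^{-γ D²}/(2 ∑_{z=1}^D e^{-γ z²} + 1)`, and its variance equals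
`(∑_{z=1}^D 2z² e^{-γ z²})/(2 ∑_{z=1}^D e^{-γ z²} + 1)`. -/
theorem tablebuilder_designed_dp
    (D : ℕ) (hD : 1 ≤ D) (ε : ℝ) (hε : 0 < ε) (γ : ℝ)
    (hγlow : ε / (2 * (D : ℝ) + 1) ≤ γ) (hγhigh : γ < ε / (2 * (D : ℝ) - 1))
    (C : ℝ)
    (hC : C = 1 / (2 * ∑ w ∈ Finset.Icc 1 D, Real.exp (-γ * (w : ℝ) ^ 2) + 1))
    (p : ℤ → ℝ)
    (hp : ∀ z : ℤ, p z = if |z| ≤ (D : ℤ) then C * Real.exp (-γ * (z : ℝ) ^ 2) else 0) :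
    (∀ n n' : ℤ, |n - n'| ≤ 1 → ∀ E : Set ℤ,
      (∑' y : E, p ((y : ℤ) - n)) ≤
        Real.exp ε * (∑' y : E, p ((y : ℤ) - n')) + C * Real.exp (-γ * (D : ℝ) ^ 2)) ∧
    (∑ z ∈ Finset.Icc (-(D : ℤ)) (D : ℤ), (z : ℝ) ^ 2 * p z =
      (∑ z ∈ Finset.Icc 1 D, 2 * (z : ℝ) ^ 2 * Real.exp (-γ * (z : ℝ) ^ 2)) /
      (2 * ∑ z ∈ Finset.Icc 1 D, Real.exp (-γ * (z : ℝ) ^ 2) + 1)) := by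
  have hC₀ : 0 ≤ C := by rw [hC]; positivity
  have hγ₀ : 0 ≤ γ := le_trans (by positivity) hγlow
  have hDR : (1 : ℝ) ≤ D := by exact_mod_cast hD
  have hγε : γ * (2 * D - 1) ≤ ε := ((lt_div_iff₀ (by linarith)).1 hγhigh).le
  obtain rfl : p = truncDiscreteGaussian C γ D := funext hp
  refine ⟨fun n n' hn E => tsum_subtype_truncDiscreteGaussian_le hC₀ hγ₀ hD hγε hn E, ?_⟩
  rw [sum_sq_mul_truncDiscreteGaussian, hC, one_div_mul_eq_div]
end
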